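/- (Admissible frontier lower bound; key lemma behind Theorem 1.) Let V be a type with edge-cost function c : V → V → ℝ≥0∞, let s, t ∈ V, let h : V → ℝ≥0∞ be admissible for t (h(n) ≤ d(n,t) for every n), and let F ⊆ V be a set that separates s from t. Then the infimum over n ∈ F of d(s,n) + h(n) is at most d(s,t). -/
import Mathlib


open scoped ENNReal

/-- A walk from `u` to `v`: a finite nonempty list of vertices starting at `u`
and ending at `v`. -/
def IsWalk {V : Type} (u v : V) (l : List V) : Prop :=
  l.head? = some u ∧ l.getLast? = some v

/-- Cost of a walk: the sum of the edge costs over consecutive pairs. -/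
noncomputable def walkCost {V : Type} (c : V → V → ℝ≥0∞) (l : List V) : ℝ≥0∞ :=
  ((l.zip l.tail).map fun p => c p.1 p.2).sum

lemma walkCost_cons_cons' {V : Type} (c : V → V → ℝ≥0∞) (a b : V) (l : List V) :
    (((((a :: b :: l).zip (b :: l)).map fun p => c p.1 p.2).sum : ℝ≥0∞))
      = c a b + (((b :: l).zip l).map fun p => c p.1 p.2).sum := rfl

lemma walkCost_cons_cons {V : Type} (c : V → V → ℝ≥0∞) (a b : V) (l : List V) :
    walkCost c (a :: b :: l) = c a b + walkCost c (b :: l) := rfl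

lemma walkCost_split {V : Type} (c : V → V → ℝ≥0∞) (x : V) (l₂ : List V) :
    ∀ l₁ : List V, walkCost c (l₁ ++ x :: l₂)
      = walkCost c (l₁ ++ [x]) + walkCost c (x :: l₂) := by
  intro l₁
  induction l₁ with
  | nil =>
    have : walkCost c [x] = 0 := rfl
    simp [this]
  | cons a l₁ ih =>
    cases l₁ with
    | nil =>
      simp only [List.nil_append, List.cons_append] at *
      rw [walkCost_cons_cons]
      have : walkCost c [a, x] = c a x := by simp [walkCost]
      rw [this]
    | cons b l₁' =>
      simp only [List.cons_append] at *
      rw [walkCost_cons_cons, walkCost_cons_cons, ih, add_assoc]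

/-- `graphDist c u v`: the infimum of the costs of all walks from `u` to `v`. -/
noncomputable def graphDist {V : Type} (c : V → V → ℝ≥0∞) (u v : V) : ℝ≥0∞ :=
  ⨅ (l : List V) (_ : IsWalk u v l), walkCost c l

/-- `F` separates `s` from `t` if every walk from `s` to `t` contains a vertex
of `F`. -/
def Separates {V : Type} (s t : V) (F : Set V) : Prop :=
  ∀ l : List V, IsWalk s t l → ∃ x ∈ F, x ∈ l

/-- A heuristic `h` is admissible for `t` if `h n ≤ d(n, t)` for every `n`. -/
def Admissible {V : Type} (c : V → V → ℝ≥0∞) (t : V) (h : V → ℝ≥0∞) : Prop :=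
  ∀ n : V, h n ≤ graphDist c n t

/-- admissible frontier lower bound: if `h` is admissible for `t`
and `F` separates `s` from `t`, then the infimum over `n ∈ F` of
`d(s,n) + h(n)` is at most `d(s,t)`. -/
theorem frontier_lower_bound {V : Type} (c : V → V → ℝ≥0∞) (s t : V)
    (h : V → ℝ≥0∞) (hadm : Admissible c t h) (F : Set V)
    (hsep : Separates s t F) :
    ⨅ n ∈ F, (graphDist c s n + h n) ≤ graphDist c s t := by
  rw [graphDist]
  refine le_iInf fun l => le_iInf fun hl => ?_
  obtain ⟨x, hxF, hxl⟩ := hsep l hl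
  obtain ⟨l₁, l₂, rfl⟩ := List.append_of_mem hxl
  have h1 : IsWalk s x (l₁ ++ [x]) := by
    constructor
    · have := hl.1
      cases l₁ with
      | nil => simpa using this
      | cons a l₁' => simpa using this
    · simp [List.getLast?_concat]
  have h2 : IsWalk x t (x :: l₂) := by
    constructor
    · rfl
    · have := hl.2
      rwa [List.getLast?_append_cons] at this
  calc ⨅ n ∈ F, (graphDist c s n + h n)
      ≤ graphDist c s x + h x := biInf_le _ hxF
    _ ≤ graphDist c s x + graphDist c x t := by gcongr; exact hadm x
    _ ≤ walkCost c (l₁ ++ [x]) + walkCost c (x :: l₂) := by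
        gcongr
        · exact iInf₂_le _ h1
        · exact iInf₂_le _ h2
    _ = walkCost c (l₁ ++ x :: l₂) := (walkCost_split c x l₂ l₁).symm
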